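/- Let (B, |·|, d) be an ultrametric Banach algebra with continuous derivation, t ∈ B with d(t) = 1, (n−1)! invertible in B, and (M, ∇) a differential module of rank n with basis e and connection matrix G_1. If |G_1| < min(1, 1/|t|, |2|/|t^2|, ..., |(n−1)!|/|t^{n−1}|)^2 · min(1, 1/|d|^{2n−3}) in the sup-norm on M_n(B), then the Katz vector c_0(e, t) = Σ_{j=0}^{n-1} (t^j/j!) Σ_{k=0}^{j} (−1)^k C(j,k) ∇^k(e_{j−k}) is a cyclic vector for M. -/

import Mathlib

/-!
In the coordinates of `e`, `∇` becomes `v ↦ d v + v G₁`. The rows of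
`H₀(t) = (t^(j-i)/(j-i)!)ᵢⱼ` satisfy `d (row i) = row (i+1)` because `d t = 1`, and the
coordinates of `c₀(e, t)` are row `0` up to terms carrying a factor `G₁`. By induction the
coordinates of `∇ⁱ c₀` are row `i` up to an error of norm
`≤ |H₀(t)| |G₁| max(1, |d|)^(2n-3)`. Since `H₀(-t) H₀(t) = 1`, multiplying the matrix of the
`∇ⁱ c₀` by `H₀(-t)` gives `1 + X` with `|X| ≤ |H₀(t)|² |G₁| max(1, |d|)^(2n-3) < 1`; in a
complete ultrametric ring `det (1 + X)` is then within `|X|` of `1`, hence a unit, and the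
`∇ⁱ c₀` form a basis.
-/

namespace KatzCyclicVector

open Finset Matrix
open scoped Nat

section Ultrametric

variable {B : Type*} [NormedCommRing B] [NormOneClass B]

lemma norm_prod_le_of_mem {ι : Type*} (s : Finset ι) (f : ι → B) {a : ι} (ha : a ∈ s) {β : ℝ}
    (hfa : ‖f a‖ ≤ β) (hf : ∀ i ∈ s, ‖f i‖ ≤ 1) : ‖∏ i ∈ s, f i‖ ≤ β := by
  classical
  have hrest : ‖∏ i ∈ s.erase a, f i‖ ≤ 1 :=
    (Finset.norm_prod_le _ _).trans (prod_le_one (fun _ _ => norm_nonneg _)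
      fun i hi => hf i (mem_of_mem_erase hi))
  rw [← mul_prod_erase s f ha]
  exact (norm_mul_le _ _).trans ((mul_le_of_le_one_right (norm_nonneg _) hrest).trans hfa)

variable [IsUltrametricDist B]

lemma norm_sum_sub_le_of_forall_ne {E ι : Type*} [SeminormedAddCommGroup E]
    [IsUltrametricDist E] [DecidableEq ι] {s : Finset ι} {f : ι → E} {a : ι} {x : E} (ha : a ∈ s)
    (hfa : f a = x) {C : ℝ} (hC : 0 ≤ C) (hf : ∀ i ∈ s, i ≠ a → ‖f i‖ ≤ C) :
    ‖∑ i ∈ s, f i - x‖ ≤ C := by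
  rw [← hfa, ← add_sum_erase s f ha, add_sub_cancel_left]
  exact IsUltrametricDist.norm_sum_le_of_forall_le_of_nonneg hC fun i hi =>
    hf i (mem_of_mem_erase hi) (ne_of_mem_erase hi)

lemma norm_prod_one_add_sub_one_le {ι : Type*} (s : Finset ι) (f : ι → B) {β : ℝ} (hβ0 : 0 ≤ β)
    (hβ1 : β ≤ 1) (hf : ∀ i ∈ s, ‖f i‖ ≤ β) : ‖∏ i ∈ s, (1 + f i) - 1‖ ≤ β := by
  induction s using Finset.cons_induction with
  | empty => simpa using hβ0
  | cons a s ha ih =>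
    have hfa := hf a (mem_cons_self a s)
    rw [prod_cons, show (1 + f a) * ∏ i ∈ s, (1 + f i) - 1
        = (∏ i ∈ s, (1 + f i) - 1) * (1 + f a) + f a by ring]
    refine (IsUltrametricDist.norm_add_le_max _ _).trans
      (max_le ((norm_mul_le _ _).trans ?_) hfa)
    have h1 : ‖1 + f a‖ ≤ 1 :=
      (IsUltrametricDist.norm_add_le_max _ _).trans (by simp [hfa.trans hβ1])
    simpa using mul_le_mul (ih fun i hi => hf i (mem_cons_of_mem hi)) h1 (norm_nonneg _) hβ0

lemma norm_det_one_add_sub_one_le {ι : Type*} [Fintype ι] [DecidableEq ι] (X : Matrix ι ι B)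
    {β : ℝ} (hβ0 : 0 ≤ β) (hβ1 : β ≤ 1) (hX : ∀ i j, ‖X i j‖ ≤ β) : ‖(1 + X).det - 1‖ ≤ β := by
  have hentry : ∀ i j, ‖(1 + X) i j‖ ≤ 1 := fun i j => by
    rw [Matrix.add_apply, one_apply]
    split_ifs
    · exact (IsUltrametricDist.norm_add_le_max _ _).trans (by simp [(hX i j).trans hβ1])
    · simpa using (hX i j).trans hβ1
  rw [det_apply, ← add_sum_erase _ _ (mem_univ 1), Equiv.Perm.sign_one, one_smul,
    add_sub_right_comm]
  refine (IsUltrametricDist.norm_add_le_max _ _).trans (max_le ?_ ?_)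
  · simpa [one_apply] using norm_prod_one_add_sub_one_le univ (fun i => X i i) hβ0 hβ1
      (fun i _ => hX i i)
  refine IsUltrametricDist.norm_sum_le_of_forall_le_of_nonneg hβ0 fun σ hσ => ?_
  obtain ⟨i, hi⟩ : ∃ i, σ i ≠ i := by
    by_contra! h
    exact ne_of_mem_erase hσ (Equiv.ext h)
  rw [Units.smul_def]
  refine (IsUltrametricDist.norm_zsmul_le _ _).trans ?_
  refine norm_prod_le_of_mem _ _ (mem_univ i) ?_ fun j _ => hentry _ _
  simpa [one_apply_ne hi] using hX (σ i) i

lemma isUnit_det_one_add [CompleteSpace B] {ι : Type*} [Fintype ι] [DecidableEq ι]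
    (X : Matrix ι ι B) {β : ℝ} (hβ0 : 0 ≤ β) (hβ1 : β < 1) (hX : ∀ i j, ‖X i j‖ ≤ β) :
    IsUnit (1 + X).det := by
  have h : ‖1 - (1 + X).det‖ < 1 := by
    rw [norm_sub_rev]; exact (norm_det_one_add_sub_one_le X hβ0 hβ1.le hX).trans_lt hβ1
  simpa using (Units.oneSub _ h).isUnit

end Ultrametric

section Exponential

variable {B : Type*} [CommRing B]

noncomputable def expTerm (t : B) (k : ℕ) : B := t ^ k * Ring.inverse (k ! : B)

lemma isUnit_factorial_of_le {m k : ℕ} (h : m ≤ k) (hu : IsUnit (k ! : B)) : IsUnit (m ! : B) :=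
  isUnit_of_dvd_unit (Nat.cast_dvd_cast (Nat.factorial_dvd_factorial h)) hu

lemma factorial_mul_expTerm (t : B) {k : ℕ} (hu : IsUnit (k ! : B)) :
    (k ! : B) * expTerm t k = t ^ k := by
  rw [expTerm, mul_left_comm, Ring.mul_inverse_cancel _ hu, mul_one]

@[simp] lemma expTerm_zero (t : B) : expTerm t 0 = 1 := by simp [expTerm]

lemma expTerm_zero_left {k : ℕ} (hk : k ≠ 0) : expTerm (0 : B) k = 0 := by
  simp [expTerm, zero_pow hk]

lemma expTerm_neg (t : B) (k : ℕ) : expTerm (-t) k = (-1) ^ k * expTerm t k := by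
  rw [expTerm, expTerm, neg_pow, mul_assoc]

lemma sum_expTerm_mul_expTerm (x y : B) {k : ℕ} (hu : IsUnit (k ! : B)) :
    ∑ a ∈ range (k + 1), expTerm x a * expTerm y (k - a) = expTerm (x + y) k := by
  refine hu.mul_left_cancel ?_
  rw [factorial_mul_expTerm _ hu, add_pow, mul_sum]
  refine sum_congr rfl fun a ha => ?_
  have hak : a ≤ k := Nat.lt_succ_iff.mp (mem_range.mp ha)
  have hchoose : (k ! : B) = (k.choose a : B) * (a ! : B) * ((k - a)! : B) := by
    rw [← Nat.choose_mul_factorial_mul_factorial hak]; push_cast; ring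
  rw [hchoose]
  calc (k.choose a : B) * (a ! : B) * ((k - a)! : B) * (expTerm x a * expTerm y (k - a))
      = (a ! : B) * expTerm x a * (((k - a)! : B) * expTerm y (k - a)) * (k.choose a : B) := by
        ring
    _ = x ^ a * y ^ (k - a) * (k.choose a : B) := by
        rw [factorial_mul_expTerm _ (isUnit_factorial_of_le hak hu),
          factorial_mul_expTerm _ (isUnit_factorial_of_le (Nat.sub_le k a) hu)]

lemma derivation_expTerm_succ (D : Derivation ℤ B B) {t : B} (ht : D t = 1) {k : ℕ}
    (hu : IsUnit ((k + 1)! : B)) : D (expTerm t (k + 1)) = expTerm t k := by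
  refine hu.mul_left_cancel ?_
  have hD := congrArg D (factorial_mul_expTerm t hu)
  rw [Derivation.leibniz, Derivation.map_natCast, smul_zero, add_zero, Derivation.leibniz_pow,
    ht, smul_eq_mul, Nat.add_sub_cancel] at hD
  rw [hD, Nat.factorial_succ, Nat.cast_mul, mul_assoc,
    factorial_mul_expTerm t (isUnit_factorial_of_le k.le_succ hu), nsmul_eq_mul, smul_eq_mul,
    mul_one]

variable {n : ℕ}

-- Row `i` of `H₀(t)`. Rows are indexed by `ℕ` so that `D` maps row `i` to row `i + 1` also
-- for the last row, row `n` being zero.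
noncomputable def expRow (t : B) (i : ℕ) : Fin n → B :=
  fun j => if i ≤ j then expTerm t (j - i) else 0

noncomputable def expMatrix (t : B) : Matrix (Fin n) (Fin n) B := of fun i j => expRow t i j

lemma expMatrix_mul (x y : B) (hu : IsUnit ((n - 1)! : B)) :
    expMatrix x * expMatrix (n := n) y = expMatrix (x + y) := by
  ext i j
  simp only [expMatrix, mul_apply, of_apply, expRow]
  rw [Fin.sum_univ_eq_sum_range (fun k => (if (i : ℕ) ≤ k then expTerm x (k - i) else 0) *
    if k ≤ (j : ℕ) then expTerm y (j - k) else 0)]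
  split_ifs with hij
  · have hsub : Ico (i : ℕ) (j + 1) ⊆ range n := fun k hk => by
      simp only [mem_Ico, mem_range] at hk ⊢; omega
    rw [← sum_subset hsub fun k _ hk => by simp only [mem_Ico] at hk; split_ifs <;> simp_all,
      sum_Ico_eq_sum_range, show (j : ℕ) + 1 - i = (j - i) + 1 by omega,
      ← sum_expTerm_mul_expTerm x y (isUnit_factorial_of_le (by omega) hu)]
    refine sum_congr rfl fun a ha => ?_
    rw [if_pos (by omega), if_pos (by simp only [mem_range] at ha; omega),
      Nat.add_sub_cancel_left, Nat.sub_add_eq]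
  · refine sum_eq_zero fun k _ => ?_
    split_ifs <;> first | omega | simp

lemma expMatrix_zero : expMatrix (0 : B) = (1 : Matrix (Fin n) (Fin n) B) := by
  ext i j
  simp only [expMatrix, of_apply, expRow, one_apply, Fin.ext_iff]
  split_ifs with h1 h2 h2
  · simp [h2]
  · exact expTerm_zero_left (by omega)
  · omega
  · rfl

lemma expMatrix_neg_mul_self (t : B) (hu : IsUnit ((n - 1)! : B)) :
    expMatrix (-t) * expMatrix (n := n) t = 1 := by
  rw [expMatrix_mul _ _ hu, neg_add_cancel, expMatrix_zero]

lemma derivation_comp_expRow (D : Derivation ℤ B B) {t : B} (ht : D t = 1)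
    (hu : IsUnit ((n - 1)! : B)) (i : ℕ) : ⇑D ∘ expRow (n := n) t i = expRow t (i + 1) := by
  ext j
  simp only [Function.comp_apply, expRow]
  split_ifs with h1 h2 h2
  · rw [show (j : ℕ) - i = j - (i + 1) + 1 by omega]
    exact derivation_expTerm_succ D ht (isUnit_factorial_of_le (by omega) hu)
  · rw [show (j : ℕ) - i = 0 by omega, expTerm_zero, Derivation.map_one_eq_zero]
  · omega
  · exact D.map_zero

end Exponential

section ExpNorms

variable {B : Type*} [NormedCommRing B] {n : ℕ} {t : B} {T : ℝ}

lemma norm_expTerm_neg (t : B) (k : ℕ) : ‖expTerm (-t) k‖ = ‖expTerm t k‖ := by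
  rw [expTerm_neg]
  rcases neg_one_pow_eq_or B k with h | h <;> simp [h]

lemma norm_expRow_le (hT0 : 0 ≤ T) (hT : ∀ m < n, ‖expTerm t m‖ ≤ T) (i : ℕ) :
    ‖expRow (n := n) t i‖ ≤ T :=
  (pi_norm_le_iff_of_nonneg hT0).2 fun j => by
    unfold expRow
    split_ifs
    · exact hT _ (by omega)
    · simpa using hT0

lemma isUnit_det_of_norm_sub_expRow_le [NormOneClass B] [IsUltrametricDist B] [CompleteSpace B]
    (hu : IsUnit ((n - 1)! : B)) (hT0 : 0 ≤ T) (hT : ∀ m < n, ‖expTerm t m‖ ≤ T)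
    {H : Matrix (Fin n) (Fin n) B} {ε : ℝ} (hε : 0 ≤ ε)
    (hH : ∀ i j, ‖H i j - expRow t i j‖ ≤ ε) (hTε : T * ε < 1) : IsUnit H.det := by
  have hKH : expMatrix (-t) * H = 1 + expMatrix (-t) * (H - expMatrix t) := by
    rw [mul_sub, expMatrix_neg_mul_self t hu, add_sub_cancel]
  have hK : ∀ i k, ‖expMatrix (n := n) (-t) i k‖ ≤ T := fun i k =>
    (norm_le_pi_norm _ k).trans
      (norm_expRow_le hT0 (fun m hm => (norm_expTerm_neg t m).trans_le (hT m hm)) i)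
  have hX : ∀ i j, ‖(expMatrix (-t) * (H - expMatrix t) : Matrix (Fin n) (Fin n) B) i j‖
      ≤ T * ε := fun i j => by
    rw [mul_apply]
    exact IsUltrametricDist.norm_sum_le_of_forall_le_of_nonneg (by positivity) fun k _ =>
      (norm_mul_le _ _).trans (mul_le_mul (hK i k) (hH k j) (norm_nonneg _) hT0)
  have h := isUnit_det_one_add _ (by positivity) hTε hX
  rw [← hKH, det_mul] at h
  exact isUnit_of_mul_isUnit_right h

end ExpNorms

section Coordinates

variable {B : Type*} [NormedCommRing B] {n : ℕ}

def coordConn (D : Derivation ℤ B B) (G : Matrix (Fin n) (Fin n) B) (v : Fin n → B) :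
    Fin n → B :=
  ⇑D ∘ v + v ᵥ* G

noncomputable def connectionMatrix {M : Type*} [AddCommGroup M] [Module B M]
    (e : Module.Basis (Fin n) B M) (nab : M → M) : Matrix (Fin n) (Fin n) B :=
  of fun i j => e.repr (nab (e i)) j

section Connection

variable {M : Type*} [AddCommGroup M] [Module B M] (e : Module.Basis (Fin n) B M)
  (D : Derivation ℤ B B) {nab : M → M} (hadd : ∀ x y, nab (x + y) = nab x + nab y)
  (hL : ∀ (b : B) (m : M), nab (b • m) = D b • m + b • nab m)
include hadd hL

lemma equivFun_conn (x : M) :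
    e.equivFun (nab x) = coordConn D (connectionMatrix e nab) (e.equivFun x) := by
  conv_lhs => rw [← e.sum_equivFun x]
  rw [← AddMonoidHom.mk'_apply nab hadd, map_sum]
  ext j
  simp [hL, coordConn, connectionMatrix, vecMul, dotProduct, sum_add_distrib,
    Finsupp.single_apply]

lemma equivFun_iterate_conn (s : ℕ) (x : M) :
    e.equivFun (nab^[s] x) = (coordConn D (connectionMatrix e nab))^[s] (e.equivFun x) :=
  Function.Semiconj.iterate_right (equivFun_conn e D hadd hL) s x

end Connection

section Norms

variable {D : Derivation ℤ B B} {G : Matrix (Fin n) (Fin n) B} {ρ g : ℝ}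

lemma coordConn_single (i : Fin n) : coordConn D G (Pi.single i 1) = G i := by
  ext j
  simp only [coordConn, Pi.add_apply, Function.comp_apply, single_one_vecMul, row_apply]
  rw [Pi.single_apply]
  split_ifs <;> simp

lemma norm_derivation_comp_le (hρ : 0 ≤ ρ) (hD : ∀ x, ‖D x‖ ≤ ρ * ‖x‖) (v : Fin n → B) :
    ‖⇑D ∘ v‖ ≤ ρ * ‖v‖ :=
  (pi_norm_le_iff_of_nonneg (by positivity)).2 fun j =>
    (hD (v j)).trans (mul_le_mul_of_nonneg_left (norm_le_pi_norm v j) hρ)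

variable [IsUltrametricDist B]

lemma norm_vecMul_le {ι : Type*} [Fintype ι] (v : ι → B) (G : Matrix ι ι B) {g : ℝ}
    (hg : 0 ≤ g) (hG : ∀ i j, ‖G i j‖ ≤ g) : ‖v ᵥ* G‖ ≤ ‖v‖ * g := by
  refine (pi_norm_le_iff_of_nonneg (by positivity)).2 fun j => ?_
  refine IsUltrametricDist.norm_sum_le_of_forall_le_of_nonneg (by positivity) fun k _ => ?_
  exact (norm_mul_le _ _).trans (mul_le_mul (norm_le_pi_norm v k) (hG k j) (norm_nonneg _)
    (norm_nonneg _))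

lemma norm_coordConn_sub_le (hρ : 0 ≤ ρ) (hD : ∀ x, ‖D x‖ ≤ ρ * ‖x‖) (hg : 0 ≤ g)
    (hG : ∀ i j, ‖G i j‖ ≤ g) (v w : Fin n → B) :
    ‖coordConn D G v - ⇑D ∘ w‖ ≤ max (ρ * ‖v - w‖) (‖v‖ * g) := by
  have h : coordConn D G v - ⇑D ∘ w = ⇑D ∘ (v - w) + v ᵥ* G := by
    ext j
    simp only [coordConn, Pi.sub_apply, Pi.add_apply, Function.comp_apply, map_sub]
    abel
  rw [h]
  exact (IsUltrametricDist.norm_add_le_max _ _).trans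
    (max_le_max (norm_derivation_comp_le hρ hD _) (norm_vecMul_le v G hg hG))

lemma norm_coordConn_le (hρ : 1 ≤ ρ) (hD : ∀ x, ‖D x‖ ≤ ρ * ‖x‖) (hg : 0 ≤ g) (hg1 : g ≤ 1)
    (hG : ∀ i j, ‖G i j‖ ≤ g) (v : Fin n → B) : ‖coordConn D G v‖ ≤ ρ * ‖v‖ := by
  have h := norm_coordConn_sub_le (by linarith) hD hg hG v 0
  rw [show ⇑D ∘ (0 : Fin n → B) = 0 from funext fun _ => D.map_zero, sub_zero, sub_zero] at h
  refine h.trans (max_le le_rfl ?_)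
  nlinarith [norm_nonneg v]

lemma norm_iterate_coordConn_single_le (hρ : 1 ≤ ρ) (hD : ∀ x, ‖D x‖ ≤ ρ * ‖x‖) (hg : 0 ≤ g)
    (hg1 : g ≤ 1) (hG : ∀ i j, ‖G i j‖ ≤ g) (i : Fin n) (s : ℕ) :
    ‖(coordConn D G)^[s + 1] (Pi.single i 1)‖ ≤ g * ρ ^ s := by
  induction s with
  | zero =>
    simpa [coordConn_single] using (pi_norm_le_iff_of_nonneg hg).2 (hG i)
  | succ s ih =>
    rw [Function.iterate_succ_apply']
    calc _ ≤ ρ * ‖(coordConn D G)^[s + 1] (Pi.single i 1)‖ :=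
          norm_coordConn_le hρ hD hg hg1 hG _
      _ ≤ ρ * (g * ρ ^ s) := by gcongr
      _ = g * ρ ^ (s + 1) := by ring

lemma norm_iterate_coordConn_sub_le (hρ : 1 ≤ ρ) (hD : ∀ x, ‖D x‖ ≤ ρ * ‖x‖) (hg : 0 ≤ g)
    (hg1 : g ≤ 1) (hG : ∀ i j, ‖G i j‖ ≤ g) {W : ℕ → Fin n → B} {T ε : ℝ}
    (hW : ∀ i, ⇑D ∘ W i = W (i + 1)) (hWT : ∀ i, ‖W i‖ ≤ T) (hTε : T * g ≤ ε)
    {v : Fin n → B} (hv : ‖v - W 0‖ ≤ ε) (i : ℕ) :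
    ‖(coordConn D G)^[i] v - W i‖ ≤ ε * ρ ^ i := by
  have hε : 0 ≤ ε := (norm_nonneg _).trans hv
  induction i with
  | zero => simpa using hv
  | succ i ih =>
    set u := (coordConn D G)^[i] v
    have hρi : 1 ≤ ρ ^ i := one_le_pow₀ hρ
    have hu : ‖u‖ ≤ max (ε * ρ ^ i) T := by
      simpa using (IsUltrametricDist.norm_add_le_max (u - W i) (W i)).trans
        (max_le_max ih (hWT i))
    rw [Function.iterate_succ_apply', ← hW i]
    refine (norm_coordConn_sub_le (by linarith) hD hg hG u (W i)).trans (max_le ?_ ?_)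
    · rw [pow_succ']
      nlinarith [norm_nonneg (u - W i)]
    · refine (mul_le_mul_of_nonneg_right hu hg).trans ?_
      rw [max_mul_of_nonneg _ _ hg, pow_succ]
      refine max_le ?_ (hTε.trans ?_) <;> nlinarith [mul_le_mul_of_nonneg_left hρi hε]

end Norms

end Coordinates

lemma exists_basis_of_isUnit_det {ι R M : Type*} [Fintype ι] [DecidableEq ι] [CommRing R]
    [AddCommGroup M] [Module R M] (e : Module.Basis ι R M) {v : ι → M}
    (h : IsUnit (of fun i j => e.repr (v i) j).det) : ∃ b : Module.Basis ι R M, ⇑b = v := by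
  obtain ⟨hli, hspan⟩ := e.is_basis_iff_det.2 (by rwa [e.det_apply, ← det_transpose])
  exact ⟨.mk hli hspan.ge, Module.Basis.coe_mk _ _⟩

section Katz

variable {B : Type*} {M : Type*} {n : ℕ}

lemma val_sub_val_lt (j : Fin n) (s : range ((j : ℕ) + 1)) : (j : ℕ) - s < n :=
  Nat.sub_lt_of_lt j.isLt

noncomputable def katzTerm [Ring B] [AddCommGroup M] [Module B M] (nab : M → M)
    (e : Module.Basis (Fin n) B M) (j : Fin n) : M :=
  ∑ s ∈ (range ((j : ℕ) + 1)).attach, ((-1 : ℤ) ^ (s : ℕ) * ((j : ℕ).choose s : ℤ)) •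
    nab^[(s : ℕ)] (e ⟨(j : ℕ) - (s : ℕ), val_sub_val_lt j s⟩)

noncomputable def katzVector [CommRing B] [AddCommGroup M] [Module B M] (nab : M → M)
    (e : Module.Basis (Fin n) B M) (t : B) : M :=
  ∑ j : Fin n, expTerm t j • katzTerm nab e j

variable [NormedCommRing B] [IsUltrametricDist B] [AddCommGroup M] [Module B M]
  (e : Module.Basis (Fin n) B M) {D : Derivation ℤ B B} {nab : M → M}
  (hadd : ∀ x y, nab (x + y) = nab x + nab y)
  (hL : ∀ (b : B) (m : M), nab (b • m) = D b • m + b • nab m)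
  {ρ g : ℝ} (hρ : 1 ≤ ρ) (hD : ∀ x, ‖D x‖ ≤ ρ * ‖x‖) (hg : 0 ≤ g)
  (hG : ∀ i j, ‖connectionMatrix e nab i j‖ ≤ g)
include hadd hL hρ hD hg hG

lemma norm_equivFun_katzTerm_sub_single_le (hg1 : g ≤ 1) (j : Fin n) :
    ‖e.equivFun (katzTerm nab e j) - Pi.single j 1‖ ≤ g * ρ ^ (n - 2) := by
  simp only [katzTerm, map_sum, map_zsmul, equivFun_iterate_conn e D hadd hL]
  simp only [e.equivFun_apply, e.repr_self, Finsupp.single_eq_pi_single]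
  refine norm_sum_sub_le_of_forall_ne (mem_attach _ ⟨0, by simp⟩) (by simp) (by positivity)
    fun s _ hs => ?_
  obtain ⟨_ | s', hsj⟩ := s
  · exact absurd rfl hs
  have hs'n : s' ≤ n - 2 := by have := mem_range.mp hsj; omega
  refine (IsUltrametricDist.norm_zsmul_le _ _).trans ?_
  exact (norm_iterate_coordConn_single_le hρ hD hg hg1 hG _ s').trans
    (mul_le_mul_of_nonneg_left (pow_le_pow_right₀ hρ hs'n) hg)

lemma norm_equivFun_katzVector_sub_le (hg1 : g ≤ 1) {t : B} {T : ℝ} (hT0 : 0 ≤ T)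
    (hT : ∀ m < n, ‖expTerm t m‖ ≤ T) :
    ‖e.equivFun (katzVector nab e t) - expRow t 0‖ ≤ T * (g * ρ ^ (n - 2)) := by
  classical
  have hrow : expRow t 0 = ∑ j : Fin n, expTerm t j • Pi.single j (1 : B) := by
    ext k; simp [expRow, Pi.single_apply]
  rw [hrow, katzVector, map_sum, ← sum_sub_distrib]
  refine IsUltrametricDist.norm_sum_le_of_forall_le_of_nonneg (by positivity) fun j _ => ?_
  rw [map_smul, ← smul_sub]
  exact (norm_smul_le _ _).trans (mul_le_mul (hT j j.2)
    (norm_equivFun_katzTerm_sub_single_le e hadd hL hρ hD hg hG hg1 j) (norm_nonneg _) hT0)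

theorem exists_basis_iterate_katzVector [NormOneClass B] [CompleteSpace B] {t : B}
    (ht : D t = 1) (hn : 0 < n) (hu : IsUnit ((n - 1)! : B)) {T : ℝ}
    (hT : ∀ m < n, ‖expTerm t m‖ ≤ T) (hsmall : g * T ^ 2 * ρ ^ (2 * n - 3) < 1) :
    ∃ b : Module.Basis (Fin n) B M, ⇑b = fun i : Fin n => nab^[i] (katzVector nab e t) := by
  have hT1 : 1 ≤ T := by simpa using hT 0 hn
  have hg1 : g ≤ 1 := by
    have : 1 ≤ T ^ 2 * ρ ^ (2 * n - 3) := one_le_mul_of_one_le_of_one_le (one_le_pow₀ hT1)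
      (one_le_pow₀ hρ)
    nlinarith
  have hrows := norm_iterate_coordConn_sub_le hρ hD hg hg1 hG (derivation_comp_expRow D ht hu)
    (norm_expRow_le (by linarith) hT)
    (mul_le_mul_of_nonneg_left (le_mul_of_one_le_right hg (one_le_pow₀ hρ)) (by linarith))
    (norm_equivFun_katzVector_sub_le e hadd hL hρ hD hg hG hg1 (by linarith) hT)
  refine exists_basis_of_isUnit_det e (isUnit_det_of_norm_sub_expRow_le hu (by linarith) hT
    (ε := T * (g * ρ ^ (n - 2)) * ρ ^ (n - 1)) (by positivity) (fun i j => ?_) ?_)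
  · rw [of_apply, ← e.equivFun_apply, equivFun_iterate_conn e D hadd hL]
    exact (norm_le_pi_norm _ j).trans ((hrows i).trans
      (mul_le_mul_of_nonneg_left (pow_le_pow_right₀ hρ (by omega)) (by positivity)))
  · calc T * (T * (g * ρ ^ (n - 2)) * ρ ^ (n - 1)) = g * T ^ 2 * ρ ^ (2 * n - 3) := by
          rw [show 2 * n - 3 = n - 2 + (n - 1) by omega, pow_add]; ring
      _ < 1 := hsmall

end Katz

lemma min_one_div_pow_mul_max_one_pow_le (δ : ℝ) (k : ℕ) :
    min 1 (1 / δ ^ k) * max 1 δ ^ k ≤ 1 := by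
  rcases le_total δ 1 with h | h
  · simp [max_eq_left h]
  · rw [max_eq_right h]
    calc _ ≤ 1 / δ ^ k * δ ^ k := by gcongr; exact min_le_right _ _
      _ = 1 := by field_simp

lemma norm_factorial_div_norm_pow {B : Type*} [NormedCommRing B] [Nontrivial B]
    (h_int : ∀ (m : ℤ) (x : B), ‖m • x‖ = ‖(m : B)‖ * ‖x‖) (t : B) {m : ℕ}
    (hu : IsUnit (m ! : B)) : ‖(m ! : B)‖ / ‖t ^ m‖ = ‖expTerm t m‖⁻¹ := by
  have h := h_int (m ! : ℤ) (expTerm t m)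
  rw [zsmul_eq_mul, Int.cast_natCast, factorial_mul_expTerm t hu] at h
  rw [h, div_mul_cancel_left₀ (norm_ne_zero_iff.2 hu.ne_zero)]

end KatzCyclicVector

open KatzCyclicVector

/-- Small connections are cyclic (sup-norm version): over a complete ultrametric Banach
algebra `(B, ‖·‖, d)` with `d(t) = 1` and `(n−1)!` invertible, if every entry of the
connection matrix `G₁` (so its sup-norm) is smaller than
`min(1, 1/‖t‖, ‖2‖/‖t²‖, …, ‖(n−1)!‖/‖t^{n−1}‖)² · min(1, 1/|d|^{2n−3})`, then the
Katz vector `c₀(e, t)` is a cyclic vector for `M`. -/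
theorem stmt17 (B : Type) [NormedCommRing B] [CompleteSpace B] [NormOneClass B]
    (h_ultra : ∀ x y : B, ‖x + y‖ ≤ max ‖x‖ ‖y‖)
    (h_int : ∀ (m : ℤ) (x : B), ‖m • x‖ = ‖(m : B)‖ * ‖x‖)
    (d : B → B)
    (hd_add : ∀ x y, d (x + y) = d x + d y)
    (hd_mul : ∀ x y, d (x * y) = x * d y + d x * y)
    (δ : ℝ) (hd_norm : ∀ x, ‖d x‖ ≤ δ * ‖x‖)
    (t : B) (ht : d t = 1)
    (n : ℕ) (hn : 0 < n) (hinv : IsUnit ((Nat.factorial (n - 1) : B)))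
    (M : Type) [AddCommGroup M] [Module B M] (e : Module.Basis (Fin n) B M)
    (nab : M → M) (hadd : ∀ x y, nab (x + y) = nab x + nab y)
    (hL : ∀ (b : B) (m : M), nab (b • m) = d b • m + b • nab m)
    (hG : ∀ i j m : Fin n,
      ‖e.repr (nab (e i)) j‖ <
        (‖(Nat.factorial (m : ℕ) : B)‖ / ‖t ^ (m : ℕ)‖) ^ 2 *
          min 1 (1 / δ ^ (2 * n - 3))) :
    ∃ b : Module.Basis (Fin n) B M, ∀ i : Fin n,
      b i = nab^[(i : ℕ)]
        (∑ j : Fin n, (t ^ (j : ℕ) * Ring.inverse ((Nat.factorial (j : ℕ) : B))) •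
          ∑ s ∈ (Finset.range ((j : ℕ) + 1)).attach,
            ((-1 : ℤ) ^ (s : ℕ) * ((j : ℕ).choose s : ℤ)) •
              nab^[(s : ℕ)] (e ⟨(j : ℕ) - (s : ℕ), by
                have hs := Finset.mem_range.mp s.2; have hj := j.isLt; omega⟩)) := by
  have : IsUltrametricDist B := .isUltrametricDist_of_forall_norm_add_le_max_norm h_ultra
  have : Nonempty (Fin n) := ⟨⟨0, hn⟩⟩
  have : Nontrivial B := NormOneClass.nontrivial
  let D : Derivation ℤ B B := .mk' (AddMonoidHom.mk' d hd_add).toIntLinearMap fun a b => by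
    simp [hd_mul, mul_comm]
  obtain ⟨m₀, hm₀⟩ := Finite.exists_max fun m : Fin n => ‖expTerm t m‖
  obtain ⟨p, hp⟩ := Finite.exists_max fun p : Fin n × Fin n => ‖connectionMatrix e nab p.1 p.2‖
  set T := ‖expTerm t m₀‖
  set g := ‖connectionMatrix e nab p.1 p.2‖
  have hT1 : 1 ≤ T := by simpa using hm₀ ⟨0, hn⟩
  have hgT : g * T ^ 2 < min 1 (1 / δ ^ (2 * n - 3)) := by
    have h := hG p.1 p.2 m₀
    rwa [norm_factorial_div_norm_pow h_int t
      (isUnit_factorial_of_le (Nat.le_sub_one_of_lt m₀.2) hinv), inv_pow, ← div_eq_inv_mul,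
      lt_div_iff₀ (by positivity)] at h
  obtain ⟨b, hb⟩ := exists_basis_iterate_katzVector e (D := D) hadd hL (le_max_left 1 δ)
    (fun x => (hd_norm x).trans (by gcongr; exact le_max_right 1 δ)) (norm_nonneg _)
    (fun i j => hp (i, j)) ht hn hinv (fun m hm => hm₀ ⟨m, hm⟩)
    (calc _ < min 1 (1 / δ ^ (2 * n - 3)) * max 1 δ ^ (2 * n - 3) := by gcongr
      _ ≤ 1 := min_one_div_pow_mul_max_one_pow_le δ _)
  exact ⟨b, fun i => congrFun hb i⟩
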